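/- arXiv:2308.15036 — 6 statements merged into one kernel-verified Lean document; each statement's English description precedes it below -/
import Mathlib

section
/- Let 0<β<1 and p>1/β with q=p/(p-1). Suppose ρ:(0,1]→ℝ is measurable and the function t↦t^{1-β}ρ(t) belongs to L^p[0,1]. Then for every t∈[0,1], |∫₀ᵗ (t/(t-s))^{1-β} ρ(s) ds| ≤ (2^{1/q} t^{β-1/p} / (qβ-q+1)^{1/q}) · (∫₀ᵗ s^{p(1-β)} |ρ(s)|^p ds)^{1/p}. -/
/-!
Write the integrand as `(s^{1-β} ρ(s)) · k(s)` with `k(s) = (t/(t-s))^{1-β} s^{β-1}` and apply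
Hölder with exponents `p, q`. Since `k(s) = (1/s + 1/(t-s))^{1-β}` and `a = q(1-β) < 1` (this is
`p > 1/β`), subadditivity of `x ↦ x^a` gives `k(s)^q ≤ s^{-a} + (t-s)^{-a}`, whose integral over
`(0,t)` is `2 t^{1-a}/(1-a)`; this produces the constant, as `(1-a)/q = β - 1/p`.
-/

open MeasureTheory Set

theorem integral_norm_mul_norm_le_of_integrable_norm_rpow {α E : Type*} [MeasurableSpace α]
    {μ : Measure α} [NormedAddCommGroup E] {f g : α → E} {p q : ℝ} (hpq : p.HolderConjugate q)
    (hf : AEStronglyMeasurable f μ) (hg : AEStronglyMeasurable g μ)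
    (hfp : Integrable (fun x => ‖f x‖ ^ p) μ) (hgq : Integrable (fun x => ‖g x‖ ^ q) μ) :
    ∫ x, ‖f x‖ * ‖g x‖ ∂μ ≤ (∫ x, ‖f x‖ ^ p ∂μ) ^ (1 / p) * (∫ x, ‖g x‖ ^ q ∂μ) ^ (1 / q) := by
  have memLp {h : α → E} {r : ℝ} (hr : 0 < r) (hm : AEStronglyMeasurable h μ)
      (hi : Integrable (fun x => ‖h x‖ ^ r) μ) : MemLp h (ENNReal.ofReal r) μ := by
    rw [← integrable_norm_rpow_iff hm (by simpa using hr) ENNReal.ofReal_ne_top,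
      ENNReal.toReal_ofReal hr.le]
    exact hi
  exact integral_mul_norm_le_Lp_mul_Lq hpq (memLp hpq.pos hf hfp) (memLp hpq.symm.pos hg hgq)

theorem intervalIntegrable_rpow_neg {a t : ℝ} (ha : a < 1) :
    IntervalIntegrable (fun s : ℝ => s ^ (-a)) volume 0 t :=
  intervalIntegral.intervalIntegrable_rpow' (by linarith)

theorem intervalIntegrable_sub_rpow_neg {a t : ℝ} (ha : a < 1) :
    IntervalIntegrable (fun s : ℝ => (t - s) ^ (-a)) volume 0 t := by
  simpa using ((intervalIntegrable_rpow_neg (t := t) ha).comp_sub_left t).symm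

theorem integrableOn_rpow_neg_add_sub_rpow_neg {a t : ℝ} (ha : a < 1) :
    IntegrableOn (fun s => s ^ (-a) + (t - s) ^ (-a)) (Ioo 0 t) :=
  ((intervalIntegrable_rpow_neg ha).add (intervalIntegrable_sub_rpow_neg ha)).1.mono_set
    Ioo_subset_Ioc_self

theorem integral_Ioo_rpow_neg_add_sub_rpow_neg {a t : ℝ} (ha : a < 1) (ht : 0 ≤ t) :
    ∫ s in Ioo 0 t, (s ^ (-a) + (t - s) ^ (-a)) = 2 * t ^ (1 - a) / (1 - a) := by
  have h : ∫ s in (0 : ℝ)..t, s ^ (-a) = t ^ (1 - a) / (1 - a) := by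
    rw [integral_rpow (Or.inl (by linarith)), Real.zero_rpow (by linarith)]
    ring_nf
  have h' : ∫ s in (0 : ℝ)..t, (t - s) ^ (-a) = t ^ (1 - a) / (1 - a) := by
    simpa [intervalIntegral.integral_comp_sub_left (fun s : ℝ => s ^ (-a)) t] using h
  rw [← integral_Ioc_eq_integral_Ioo, ← intervalIntegral.integral_of_le ht,
    intervalIntegral.integral_add (intervalIntegrable_rpow_neg ha)
      (intervalIntegrable_sub_rpow_neg ha), h, h']
  ring

theorem norm_kernel_rpow_le {b q s t : ℝ} (hb : 0 ≤ b) (hq : 0 < q) (hqb : q * b ≤ 1)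
    (hs : 0 < s) (hst : s < t) :
    ‖(t / (t - s)) ^ b * s ^ (-b)‖ ^ q ≤ s ^ (-(q * b)) + (t - s) ^ (-(q * b)) := by
  have hts : 0 < t - s := sub_pos.2 hst
  have key : (t / (t - s)) ^ b * s ^ (-b) = (s⁻¹ + (t - s)⁻¹) ^ b := by
    rw [Real.rpow_neg hs.le, ← Real.inv_rpow hs.le,
      ← Real.mul_rpow (div_pos (hs.trans hst) hts).le (by positivity)]
    congr 1
    field_simp
    ring
  rw [key, Real.norm_of_nonneg (by positivity), ← Real.rpow_mul (by positivity), mul_comm b q,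
    Real.rpow_neg hs.le, Real.rpow_neg hts.le, ← Real.inv_rpow hs.le, ← Real.inv_rpow hts.le]
  exact Real.rpow_add_le_add_rpow (by positivity) (by positivity) (mul_nonneg hq.le hb) hqb

theorem integrableOn_norm_kernel_rpow {b q t : ℝ} (hb : 0 ≤ b) (hq : 0 < q) (hqb : q * b < 1) :
    IntegrableOn (fun s => ‖(t / (t - s)) ^ b * s ^ (-b)‖ ^ q) (Ioo 0 t) := by
  refine (integrableOn_rpow_neg_add_sub_rpow_neg hqb).mono'
    (Measurable.aestronglyMeasurable (by fun_prop)) ?_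
  filter_upwards [ae_restrict_mem measurableSet_Ioo] with s ⟨hs, hst⟩
  rw [Real.norm_of_nonneg (by positivity)]
  exact norm_kernel_rpow_le hb hq hqb.le hs hst

theorem setIntegral_norm_kernel_rpow_le {b q t : ℝ} (hb : 0 ≤ b) (hq : 0 < q) (hqb : q * b < 1)
    (ht : 0 ≤ t) :
    ∫ s in Ioo 0 t, ‖(t / (t - s)) ^ b * s ^ (-b)‖ ^ q ≤ 2 * t ^ (1 - q * b) / (1 - q * b) := by
  rw [← integral_Ioo_rpow_neg_add_sub_rpow_neg hqb ht]
  exact setIntegral_mono_on (integrableOn_norm_kernel_rpow hb hq hqb)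
    (integrableOn_rpow_neg_add_sub_rpow_neg hqb) measurableSet_Ioo
    fun s ⟨hs, hst⟩ => norm_kernel_rpow_le hb hq hqb.le hs hst

/-- Lemma 2.3: weakly singular integral inequality. -/
theorem stmt_0 (β p q : ℝ) (hβ0 : 0 < β) (hβ1 : β < 1)
    (hp : 1 / β < p) (hq : q = p / (p - 1))
    (ρ : ℝ → ℝ) (hρ : Measurable ρ)
    (hLp : IntegrableOn (fun t => |t ^ (1 - β) * ρ t| ^ p) (Ioc (0:ℝ) 1)) :
    ∀ t ∈ Icc (0:ℝ) 1,
      |∫ s in Ioo (0:ℝ) t, (t / (t - s)) ^ (1 - β) * ρ s| ≤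
        (2:ℝ) ^ (1 / q) * t ^ (β - 1 / p) / (q * β - q + 1) ^ (1 / q) *
          (∫ s in Ioo (0:ℝ) t, s ^ (p * (1 - β)) * |ρ s| ^ p) ^ (1 / p) := by
  rintro t ⟨ht0, ht1⟩
  have hp1 : 1 < p := (one_lt_one_div hβ0 hβ1).trans hp
  have hpq : p.HolderConjugate q := (Real.holderConjugate_iff_eq_conjExponent hp1).2 hq
  have hpq_inv : 1 / p + 1 / q = 1 := by simpa using hpq.one_div_add_one_div
  have hqb : q * (1 - β) < 1 := by
    have : 1 / p < β := by rwa [one_div_lt hpq.pos hβ0]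
    rw [← lt_div_iff₀' hpq.symm.pos]
    linarith
  have hexp : (1 - q * (1 - β)) * (1 / q) = β - 1 / p := by
    have : (1 - q * (1 - β)) * (1 / q) = 1 / q - (1 - β) := by
      field_simp [hpq.symm.ne_zero]
    linarith
  have hsplit : ∀ s ∈ Ioo (0 : ℝ) t, |(t / (t - s)) ^ (1 - β) * ρ s| =
      ‖s ^ (1 - β) * ρ s‖ * ‖(t / (t - s)) ^ (1 - β) * s ^ (-(1 - β))‖ := by
    intro s ⟨hs, _⟩
    rw [Real.norm_eq_abs, Real.norm_eq_abs, ← abs_mul, Real.rpow_neg hs.le]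
    field_simp [(Real.rpow_pos_of_pos hs (1 - β)).ne']
  have hweighted : ∫ s in Ioo 0 t, ‖s ^ (1 - β) * ρ s‖ ^ p =
      ∫ s in Ioo 0 t, s ^ (p * (1 - β)) * |ρ s| ^ p :=
    setIntegral_congr_fun measurableSet_Ioo fun s ⟨hs, _⟩ => by
      rw [Real.norm_eq_abs, abs_mul, Real.mul_rpow (abs_nonneg _) (abs_nonneg _),
        abs_of_nonneg (Real.rpow_nonneg hs.le _), ← Real.rpow_mul hs.le, mul_comm (1 - β) p]
  calc |∫ s in Ioo 0 t, (t / (t - s)) ^ (1 - β) * ρ s|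
      ≤ ∫ s in Ioo 0 t, |(t / (t - s)) ^ (1 - β) * ρ s| := abs_integral_le_integral_abs
    _ = ∫ s in Ioo 0 t, ‖s ^ (1 - β) * ρ s‖ * ‖(t / (t - s)) ^ (1 - β) * s ^ (-(1 - β))‖ :=
      setIntegral_congr_fun measurableSet_Ioo hsplit
    _ ≤ (∫ s in Ioo 0 t, ‖s ^ (1 - β) * ρ s‖ ^ p) ^ (1 / p) *
          (∫ s in Ioo 0 t, ‖(t / (t - s)) ^ (1 - β) * s ^ (-(1 - β))‖ ^ q) ^ (1 / q) :=
      integral_norm_mul_norm_le_of_integrable_norm_rpow hpq (by fun_prop) (by fun_prop)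
        (hLp.mono_set fun s ⟨hs, hst⟩ => ⟨hs, hst.le.trans ht1⟩)
        (integrableOn_norm_kernel_rpow (by linarith) hpq.symm.pos hqb)
    _ ≤ (∫ s in Ioo 0 t, ‖s ^ (1 - β) * ρ s‖ ^ p) ^ (1 / p) *
          (2 * t ^ (1 - q * (1 - β)) / (1 - q * (1 - β))) ^ (1 / q) := by
      gcongr
      · exact one_div_nonneg.2 hpq.symm.nonneg
      · exact setIntegral_norm_kernel_rpow_le (by linarith) hpq.symm.pos hqb ht0
    _ = _ := by
      rw [hweighted, Real.div_rpow (by positivity) (by linarith),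
        Real.mul_rpow (by norm_num) (by positivity), ← Real.rpow_mul ht0, hexp,
        show q * β - q + 1 = 1 - q * (1 - β) by ring]
      ring
end

section
/- Let 0<β<1 and suppose ρ is continuous on (0,+∞) and Lebesgue integrable on every bounded subinterval of [0,+∞). If the function t↦t^β ρ(t) is nonincreasing on (0,+∞), then the function y(t)=∫₀ᵗ (t-s)^{β-1} ρ(s) ds is nonincreasing on (0,+∞). -/
/-!
The substitution `s = t u` turns the fractional integral into
`y(t) = ∫₀¹ (1 - u)^(β-1) u^(-β) · (t u)^β ρ(t u) du`. The weight `(1 - u)^(β-1) u^(-β)`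
is nonnegative and does not depend on `t`, while `t ↦ (t u)^β ρ(t u)` is nonincreasing for each
fixed `u ∈ (0, 1)`, so `y` is nonincreasing.
-/

open MeasureTheory Set

theorem integrableOn_rpow_sub_mul_of_lt {ρ : ℝ → ℝ} {a b c t : ℝ} (hct : c < t)
    (hρ : IntegrableOn ρ (Ioc b c)) : IntegrableOn (fun x => (t - x) ^ a * ρ x) (Ioc b c) :=
  hρ.continuousOn_mul_of_subset
    (fun _ hx => ((continuous_const.sub continuous_id).continuousAt.rpow_const
      (Or.inl (sub_pos.2 (hx.2.trans_lt hct)).ne')).continuousWithinAt)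
    isCompact_Icc measurableSet_Ioc Ioc_subset_Icc_self

theorem integrableOn_rpow_sub_mul_of_continuousOn {ρ : ℝ → ℝ} {a c t : ℝ} (ha : -1 < a)
    (hρ : ContinuousOn ρ (Icc c t)) : IntegrableOn (fun x => (t - x) ^ a * ρ x) (Ioc c t) := by
  have hkernel : IntervalIntegrable (fun x => (t - x) ^ a) volume c t := by
    simpa using
      (intervalIntegral.intervalIntegrable_rpow' (a := t - c) (b := 0) ha).comp_sub_left t
  exact hkernel.1.mul_continuousOn_of_subset hρ measurableSet_Ioc isCompact_Icc
    Ioc_subset_Icc_self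

theorem integrableOn_rpow_sub_mul {ρ : ℝ → ℝ} {a b t : ℝ} (ha : -1 < a)
    (hρc : ContinuousOn ρ (Ioc b t)) (hρi : IntegrableOn ρ (Ioc b t)) :
    IntegrableOn (fun x => (t - x) ^ a * ρ x) (Ioc b t) := by
  rcases le_or_gt t b with htb | hbt
  · simp [Ioc_eq_empty_of_le htb]
  obtain ⟨hbc, hct⟩ : b < (b + t) / 2 ∧ (b + t) / 2 < t := ⟨by linarith, by linarith⟩
  rw [← Ioc_union_Ioc_eq_Ioc hbc.le hct.le]
  exact (integrableOn_rpow_sub_mul_of_lt hct (hρi.mono_set (Ioc_subset_Ioc_right hct.le))).union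
    (integrableOn_rpow_sub_mul_of_continuousOn ha (hρc.mono (Icc_subset_Ioc_left hbc)))

theorem mul_rpow_sub_mul_eq {β t u : ℝ} (r : ℝ) (ht : 0 < t) (hu : u ∈ Ioc (0 : ℝ) 1) :
    t * ((t - t * u) ^ (β - 1) * r) = (1 - u) ^ (β - 1) * u ^ (-β) * ((t * u) ^ β * r) := by
  have hmul : t * t ^ (β - 1) = t ^ β := by
    simpa using (Real.rpow_add ht 1 (β - 1)).symm
  have hinv : u ^ (-β) * u ^ β = 1 := by rw [← Real.rpow_add hu.1]; simp
  rw [show t - t * u = t * (1 - u) by ring, Real.mul_rpow ht.le (by linarith [hu.2]),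
    Real.mul_rpow ht.le hu.1.le]
  linear_combination (1 - u) ^ (β - 1) * r * hmul - (1 - u) ^ (β - 1) * r * t ^ β * hinv

theorem integral_rpow_sub_mul_eq_integral_comp_mul {β t : ℝ} (ρ : ℝ → ℝ) (ht : 0 < t) :
    ∫ s in (0 : ℝ)..t, (t - s) ^ (β - 1) * ρ s =
      ∫ u in (0 : ℝ)..1, (1 - u) ^ (β - 1) * u ^ (-β) * ((t * u) ^ β * ρ (t * u)) := by
  have hsubst := intervalIntegral.smul_integral_comp_mul_left
    (a := 0) (b := 1) (fun s => (t - s) ^ (β - 1) * ρ s) t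
  rw [mul_zero, mul_one] at hsubst
  rw [← hsubst, smul_eq_mul, ← intervalIntegral.integral_const_mul,
    intervalIntegral.integral_of_le zero_le_one, intervalIntegral.integral_of_le zero_le_one]
  exact setIntegral_congr_fun measurableSet_Ioc fun u hu => mul_rpow_sub_mul_eq _ ht hu

theorem IntervalIntegrable.rpow_sub_mul_comp_mul {β t : ℝ} {ρ : ℝ → ℝ} (ht : 0 < t)
    (h : IntervalIntegrable (fun s => (t - s) ^ (β - 1) * ρ s) volume 0 t) :
    IntervalIntegrable (fun u => (1 - u) ^ (β - 1) * u ^ (-β) * ((t * u) ^ β * ρ (t * u)))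
      volume 0 1 := by
  have hsubst := (h.comp_mul_left (c := t)).const_mul t
  rw [zero_div, div_self ht.ne'] at hsubst
  rw [intervalIntegrable_iff_integrableOn_Ioc_of_le zero_le_one] at hsubst ⊢
  exact hsubst.congr_fun (fun u hu => mul_rpow_sub_mul_eq _ ht hu) measurableSet_Ioc

theorem antitoneOn_integral_mul_comp_mul {w g : ℝ → ℝ} (hw : ∀ u ∈ Ioo (0 : ℝ) 1, 0 ≤ w u)
    (hg : AntitoneOn g (Ioi 0))
    (hint : ∀ t > 0, IntervalIntegrable (fun u => w u * g (t * u)) volume 0 1) :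
    AntitoneOn (fun t => ∫ u in (0 : ℝ)..1, w u * g (t * u)) (Ioi 0) := by
  intro t₁ h₁ t₂ h₂ h₁₂
  refine intervalIntegral.integral_mono_on_of_le_Ioo zero_le_one (hint t₂ h₂) (hint t₁ h₁)
    fun u hu => mul_le_mul_of_nonneg_left ?_ (hw u hu)
  exact hg (mul_pos h₁ hu.1) (mul_pos h₂ hu.1) (mul_le_mul_of_nonneg_right h₁₂ hu.1.le)

theorem stmt_2_general (β : ℝ) (hβ0 : 0 < β)
    (ρ : ℝ → ℝ) (hρc : ContinuousOn ρ (Ioi 0))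
    (hρint : ∀ T > 0, IntegrableOn ρ (Ioc (0:ℝ) T))
    (hmono : AntitoneOn (fun t => t ^ β * ρ t) (Ioi (0:ℝ))) :
    AntitoneOn (fun t => ∫ s in Ioo (0:ℝ) t, (t - s) ^ (β - 1) * ρ s) (Ioi (0:ℝ)) := by
  have hkernel (t : ℝ) (ht : 0 < t) :
      IntervalIntegrable (fun s => (t - s) ^ (β - 1) * ρ s) volume 0 t :=
    (intervalIntegrable_iff_integrableOn_Ioc_of_le ht.le).2 <|
      integrableOn_rpow_sub_mul (by linarith) (hρc.mono Ioc_subset_Ioi_self) (hρint t ht)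
  have hsubst : EqOn
      (fun t => ∫ u in (0 : ℝ)..1, (1 - u) ^ (β - 1) * u ^ (-β) * ((t * u) ^ β * ρ (t * u)))
      (fun t => ∫ s in Ioo (0 : ℝ) t, (t - s) ^ (β - 1) * ρ s) (Ioi 0) := fun t ht => by
    simp only [← integral_Ioc_eq_integral_Ioo, ← intervalIntegral.integral_of_le (le_of_lt ht),
      integral_rpow_sub_mul_eq_integral_comp_mul ρ ht]
  refine (antitoneOn_integral_mul_comp_mul (fun u hu => ?_) hmono
    fun t ht => (hkernel t ht).rpow_sub_mul_comp_mul ht).congr hsubst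
  exact mul_nonneg (Real.rpow_nonneg (by linarith [hu.2]) _) (Real.rpow_nonneg hu.1.le _)

/-- Lemma 2.6 (1): if `t^β ρ(t)` is nonincreasing on `(0,∞)`, then the fractional
integral function `y(t) = ∫₀ᵗ (t-s)^(β-1) ρ(s) ds` is nonincreasing on `(0,∞)`. -/
theorem stmt_2 (β : ℝ) (hβ0 : 0 < β) (hβ1 : β < 1)
    (ρ : ℝ → ℝ) (hρc : ContinuousOn ρ (Ioi 0))
    (hρint : ∀ T > 0, IntegrableOn ρ (Ioc (0:ℝ) T))
    (hmono : AntitoneOn (fun t => t ^ β * ρ t) (Ioi (0:ℝ))) :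
    AntitoneOn (fun t => ∫ s in Ioo (0:ℝ) t, (t - s) ^ (β - 1) * ρ s) (Ioi (0:ℝ)) :=
  stmt_2_general β hβ0 ρ hρc hρint hmono
end

section
/- Let 0<β<1 and suppose ρ is continuous on (0,+∞) and Lebesgue integrable on every bounded subinterval of [0,+∞). If the function t↦t^β ρ(t) is nondecreasing on (0,+∞), then the function y(t)=∫₀ᵗ (t-s)^{β-1} ρ(s) ds is nondecreasing on (0,+∞). -/
/-!
Substituting `s = t u` and writing `f(s) = s^β ρ(s)` gives
`y(t) = ∫₀¹ (1 - u)^(β-1) u^(-β) f(t u) du`.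
The weight is nonnegative and `t ↦ f(t u)` is nondecreasing for each `u ∈ (0,1)`,
so `y` is nondecreasing.
-/

open MeasureTheory Set Real

section

variable {β t : ℝ}

theorem integrableOn_Ioc_rpow_sub_mul (hβ : 0 < β) {a : ℝ} (hat : a < t) {ρ : ℝ → ℝ}
    (hρc : ContinuousOn ρ (Ioc a t)) (hρi : IntegrableOn ρ (Ioc a t)) :
    IntegrableOn (fun s => (t - s) ^ (β - 1) * ρ s) (Ioc a t) := by
  -- Away from `t` the kernel is bounded; near `t` it is integrable (as `β > 0`) and `ρ` is bounded.
  obtain ⟨m, ham, hmt⟩ := exists_between hat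
  rw [← Ioc_union_Ioc_eq_Ioc ham.le hmt.le]
  refine IntegrableOn.union ?_ ?_
  · have hkernel : ContinuousOn (fun s => (t - s) ^ (β - 1)) (Icc a m) :=
      (continuousOn_const.sub continuousOn_id).rpow_const
        fun s hs => Or.inl (sub_pos.2 (hs.2.trans_lt hmt)).ne'
    exact (hρi.mono_set (Ioc_subset_Ioc_right hmt.le)).continuousOn_mul_of_subset hkernel
      isCompact_Icc measurableSet_Ioc Ioc_subset_Icc_self
  · have hkernel : IntegrableOn (fun s => (t - s) ^ (β - 1)) (Ioc m t) := by
      have h := (intervalIntegral.intervalIntegrable_rpow' (a := 0) (b := t - m) (r := β - 1)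
        (by linarith)).comp_sub_left t
      rw [sub_zero, sub_sub_cancel] at h
      exact (intervalIntegrable_iff_integrableOn_Ioc_of_le hmt.le).1 h.symm
    exact hkernel.mul_continuousOn_of_subset (hρc.mono (Icc_subset_Ioc ham le_rfl))
      measurableSet_Ioc isCompact_Icc Ioc_subset_Icc_self

theorem integrableOn_Ioc_comp_mul_left {g : ℝ → ℝ} (ht : 0 < t)
    (hg : IntegrableOn g (Ioc 0 t)) : IntegrableOn (fun u => g (t * u)) (Ioc 0 1) := by
  have h := ((intervalIntegrable_iff_integrableOn_Ioc_of_le ht.le).2 hg).comp_mul_left (c := t)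
  rw [zero_div, div_self ht.ne'] at h
  exact (intervalIntegrable_iff_integrableOn_Ioc_of_le zero_le_one).1 h

theorem setIntegral_Ioo_eq_mul_setIntegral_comp_mul_left (g : ℝ → ℝ) (ht : 0 ≤ t) :
    ∫ s in Ioo 0 t, g s = t * ∫ u in Ioo 0 1, g (t * u) := by
  simp only [← integral_Ioc_eq_integral_Ioo, ← intervalIntegral.integral_of_le ht,
    ← intervalIntegral.integral_of_le zero_le_one]
  rw [← smul_eq_mul, intervalIntegral.smul_integral_comp_mul_left, mul_zero, mul_one]

theorem mul_rpow_sub_mul_mul_eq (ht : 0 < t) {u : ℝ} (hu : u ∈ Ioo 0 1) (r : ℝ) :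
    t * ((t - t * u) ^ (β - 1) * r) = (1 - u) ^ (β - 1) * u ^ (-β) * ((t * u) ^ β * r) := by
  have hu' : 0 < 1 - u := by linarith [hu.2]
  rw [show t - t * u = t * (1 - u) by ring, mul_rpow ht.le hu'.le, mul_rpow ht.le hu.1.le,
    rpow_sub_one ht.ne', rpow_neg hu.1.le]
  have hu_pow : 0 < u ^ β := rpow_pos_of_pos hu.1 β
  field_simp

theorem setIntegral_rpow_sub_mul_eq_setIntegral_rescaled (ht : 0 < t) (ρ : ℝ → ℝ) :
    ∫ s in Ioo 0 t, (t - s) ^ (β - 1) * ρ s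
      = ∫ u in Ioo 0 1, (1 - u) ^ (β - 1) * u ^ (-β) * ((t * u) ^ β * ρ (t * u)) := by
  rw [setIntegral_Ioo_eq_mul_setIntegral_comp_mul_left _ ht.le, ← integral_const_mul]
  exact setIntegral_congr_fun measurableSet_Ioo fun u hu => mul_rpow_sub_mul_mul_eq ht hu _

theorem integrableOn_rescaled_of_integrableOn_rpow_sub_mul (ht : 0 < t) {ρ : ℝ → ℝ}
    (h : IntegrableOn (fun s => (t - s) ^ (β - 1) * ρ s) (Ioc 0 t)) :
    IntegrableOn (fun u => (1 - u) ^ (β - 1) * u ^ (-β) * ((t * u) ^ β * ρ (t * u)))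
      (Ioo 0 1) :=
  IntegrableOn.congr_fun
    (((integrableOn_Ioc_comp_mul_left ht h).mono_set Ioo_subset_Ioc_self).const_mul t)
    (fun _ hu => mul_rpow_sub_mul_mul_eq ht hu _) measurableSet_Ioo

end

theorem stmt_3_general (β : ℝ) (hβ0 : 0 < β)
    (ρ : ℝ → ℝ) (hρc : ContinuousOn ρ (Ioi 0))
    (hρint : ∀ T > 0, IntegrableOn ρ (Ioc (0:ℝ) T))
    (hmono : MonotoneOn (fun t => t ^ β * ρ t) (Ioi (0:ℝ))) :
    MonotoneOn (fun t => ∫ s in Ioo (0:ℝ) t, (t - s) ^ (β - 1) * ρ s) (Ioi (0:ℝ)) := by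
  have hrescaled : ∀ t : ℝ, 0 < t → IntegrableOn
      (fun u => (1 - u) ^ (β - 1) * u ^ (-β) * ((t * u) ^ β * ρ (t * u))) (Ioo 0 1) :=
    fun t ht => integrableOn_rescaled_of_integrableOn_rpow_sub_mul ht <|
      integrableOn_Ioc_rpow_sub_mul hβ0 ht (hρc.mono Ioc_subset_Ioi_self) (hρint t ht)
  intro a ha b hb hab
  simp only [setIntegral_rpow_sub_mul_eq_setIntegral_rescaled ha,
    setIntegral_rpow_sub_mul_eq_setIntegral_rescaled hb]
  refine setIntegral_mono_on (hrescaled a ha) (hrescaled b hb) measurableSet_Ioo fun u hu => ?_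
  have hweight : 0 ≤ (1 - u) ^ (β - 1) * u ^ (-β) :=
    mul_nonneg (rpow_nonneg (by linarith [hu.2]) _) (rpow_nonneg hu.1.le _)
  exact mul_le_mul_of_nonneg_left (hmono (mul_pos ha hu.1) (mul_pos hb hu.1)
    (mul_le_mul_of_nonneg_right hab hu.1.le)) hweight

/-- Lemma 2.6 (2): if `t^β ρ(t)` is nondecreasing on `(0,∞)`, then the fractional
integral function `y(t) = ∫₀ᵗ (t-s)^(β-1) ρ(s) ds` is nondecreasing on `(0,∞)`. -/
theorem stmt_3 (β : ℝ) (hβ0 : 0 < β) (hβ1 : β < 1)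
    (ρ : ℝ → ℝ) (hρc : ContinuousOn ρ (Ioi 0))
    (hρint : ∀ T > 0, IntegrableOn ρ (Ioc (0:ℝ) T))
    (hmono : MonotoneOn (fun t => t ^ β * ρ t) (Ioi (0:ℝ))) :
    MonotoneOn (fun t => ∫ s in Ioo (0:ℝ) t, (t - s) ^ (β - 1) * ρ s) (Ioi (0:ℝ)) :=
  stmt_3_general β hβ0 ρ hρc hρint hmono
end

section
/- Let 0<β<1 and suppose ρ is continuous on (0,+∞) and Lebesgue integrable on every bounded subinterval of [0,+∞). If lim_{t→+∞} t^β ρ(t) = 0, then lim_{t→+∞} ∫₀ᵗ (t-s)^{β-1} ρ(s) ds = 0. -/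
/-!
Split `(0, t)` at a point `M` beyond which `|ρ s| ≤ δ s^(-β)`. On `(0, M)` the kernel
`(t - s)^(β - 1)` tends to `0` uniformly, so that piece vanishes by dominated convergence. On
`[M, t)` the integral is at most `δ ∫₀ᵗ (t - s)^(β - 1) s^(-β) ds`, and the substitution
`s = t u` shows that this Beta integral does not depend on `t`.
-/

open MeasureTheory Set Filter

open scoped Topology

lemma integrableOn_one_sub_rpow_mul_rpow {p q : ℝ} (hp : -1 < p) (hq : -1 < q) :
    IntegrableOn (fun u : ℝ => (1 - u) ^ p * u ^ q) (Ioc 0 1) := by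
  have hbeta := Complex.betaIntegral_convergent (u := q + 1) (v := p + 1)
    (by simp only [Complex.add_re, Complex.ofReal_re, Complex.one_re]; linarith)
    (by simp only [Complex.add_re, Complex.ofReal_re, Complex.one_re]; linarith)
  rw [intervalIntegrable_iff_integrableOn_Ioo_of_le zero_le_one] at hbeta
  rw [integrableOn_Ioc_iff_integrableOn_Ioo]
  refine IntegrableOn.congr_fun hbeta.norm (fun u hu => ?_) measurableSet_Ioo
  have h1u : 0 < 1 - u := sub_pos.2 hu.2
  rw [norm_mul, Complex.norm_cpow_eq_rpow_re_of_pos hu.1, ← Complex.ofReal_one,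
    ← Complex.ofReal_sub, Complex.norm_cpow_eq_rpow_re_of_pos h1u]
  simp [mul_comm]

lemma sub_rpow_mul_rpow_eq {p q t s : ℝ} (ht : 0 < t) (hs : s ∈ Icc 0 t) :
    (t - s) ^ p * s ^ q = t ^ (p + q) * ((1 - s / t) ^ p * (s / t) ^ q) := by
  rw [one_sub_div ht.ne', Real.div_rpow (sub_nonneg.2 hs.2) ht.le, Real.div_rpow hs.1 ht.le,
    Real.rpow_add ht]
  field_simp

lemma integral_Ioc_sub_rpow_mul_rpow (p q : ℝ) {t : ℝ} (ht : 0 < t) :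
    ∫ s in Ioc 0 t, (t - s) ^ p * s ^ q =
      t ^ (p + q + 1) * ∫ u in Ioc 0 1, (1 - u) ^ p * u ^ q := by
  rw [← intervalIntegral.integral_of_le ht.le, ← intervalIntegral.integral_of_le zero_le_one,
    intervalIntegral.integral_congr fun s hs => sub_rpow_mul_rpow_eq ht (uIcc_of_le ht.le ▸ hs),
    intervalIntegral.integral_const_mul,
    intervalIntegral.integral_comp_div (fun u => (1 - u) ^ p * u ^ q) ht.ne', zero_div,
    div_self ht.ne', smul_eq_mul, Real.rpow_add_one ht.ne']
  ring

lemma integrableOn_sub_rpow_mul_rpow {p q t : ℝ} (hp : -1 < p) (hq : -1 < q) (ht : 0 < t) :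
    IntegrableOn (fun s => (t - s) ^ p * s ^ q) (Ioc 0 t) := by
  have hbeta := (intervalIntegrable_iff_integrableOn_Ioc_of_le zero_le_one).2
    (integrableOn_one_sub_rpow_mul_rpow hp hq)
  have hscaled := (hbeta.comp_mul_right (c := t⁻¹)).const_mul (t ^ (p + q))
  rw [zero_div, one_div, inv_inv, intervalIntegrable_iff_integrableOn_Ioc_of_le ht.le] at hscaled
  refine hscaled.congr_fun (fun s hs => ?_) measurableSet_Ioc
  simp only [← div_eq_mul_inv]
  exact (sub_rpow_mul_rpow_eq ht (Ioc_subset_Icc_self hs)).symm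

section Head

variable {p M : ℝ} {S : Set ℝ} {g : ℝ → ℝ}

lemma integrableOn_sub_rpow_mul {t : ℝ} (hp : p ≤ 0) (hMt : M < t) (hS : S ⊆ Iic M)
    (hSm : MeasurableSet S) (hg : IntegrableOn g S) :
    IntegrableOn (fun s => (t - s) ^ p * g s) S := by
  refine (hg.norm.const_mul ((t - M) ^ p)).mono'
    ((by fun_prop : Measurable fun s => (t - s) ^ p).aestronglyMeasurable.mul
      hg.aestronglyMeasurable) (ae_restrict_of_forall_mem hSm fun s hs => ?_)
  have hts : t - M ≤ t - s := by linarith [mem_Iic.1 (hS hs)]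
  rw [norm_mul, Real.norm_of_nonneg (Real.rpow_nonneg (by linarith) _)]
  exact mul_le_mul_of_nonneg_right (Real.rpow_le_rpow_of_nonpos (by linarith) hts hp)
    (norm_nonneg _)

lemma tendsto_setIntegral_sub_rpow_mul_atTop (hp : p < 0) (hS : S ⊆ Iic M)
    (hSm : MeasurableSet S) (hg : IntegrableOn g S) :
    Tendsto (fun t => ∫ s in S, (t - s) ^ p * g s) atTop (𝓝 0) := by
  have hlim :
      Tendsto (fun t => ∫ s in S, (t - s) ^ p * g s) atTop (𝓝 (∫ s in S, 0 * g s)) := by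
    refine tendsto_integral_filter_of_dominated_convergence (fun s => ‖g s‖)
      (Eventually.of_forall fun t =>
        (by fun_prop : Measurable fun s => (t - s) ^ p).aestronglyMeasurable.mul
          hg.aestronglyMeasurable) ?_ hg.norm (ae_of_all _ fun s => ?_)
    · filter_upwards [eventually_ge_atTop (M + 1)] with t ht
      refine ae_restrict_of_forall_mem hSm fun s hs => ?_
      have hts : 1 ≤ t - s := by linarith [mem_Iic.1 (hS hs)]
      rw [norm_mul, Real.norm_of_nonneg (Real.rpow_nonneg (by linarith) _)]
      exact mul_le_of_le_one_left (norm_nonneg _) (Real.rpow_le_one_of_one_le_of_nonpos hts hp.le)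
    · have hpow := (tendsto_rpow_neg_atTop (neg_pos.2 hp)).comp
        (tendsto_atTop_add_const_right _ (-s) tendsto_id)
      simp only [neg_neg] at hpow
      exact hpow.mul_const (g s)
  simpa using hlim

end Head

section Tail

variable {p q ε t : ℝ} {S : Set ℝ} {ρ : ℝ → ℝ}

lemma norm_sub_rpow_mul_le_of_abs_le {s : ℝ} (hs : s ∈ Ioc 0 t) (hρ : |ρ s| ≤ ε * s ^ q) :
    ‖(t - s) ^ p * ρ s‖ ≤ ε * ((t - s) ^ p * s ^ q) := by
  have hts : 0 ≤ (t - s) ^ p := Real.rpow_nonneg (sub_nonneg.2 hs.2) _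
  rw [norm_mul, Real.norm_of_nonneg hts, Real.norm_eq_abs, mul_left_comm]
  exact mul_le_mul_of_nonneg_left hρ hts

lemma integrableOn_sub_rpow_mul_of_abs_le (hp : -1 < p) (hq : -1 < q) (ht : 0 < t)
    (hS : S ⊆ Ioc 0 t) (hSm : MeasurableSet S)
    (hρm : AEStronglyMeasurable ρ (volume.restrict S))
    (hρ : ∀ s ∈ S, |ρ s| ≤ ε * s ^ q) :
    IntegrableOn (fun s => (t - s) ^ p * ρ s) S :=
  (((integrableOn_sub_rpow_mul_rpow hp hq ht).mono_set hS).const_mul ε).mono'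
    ((by fun_prop : Measurable fun s => (t - s) ^ p).aestronglyMeasurable.mul hρm)
    (ae_restrict_of_forall_mem hSm fun s hs => norm_sub_rpow_mul_le_of_abs_le (hS hs) (hρ s hs))

lemma norm_setIntegral_sub_rpow_mul_le (hp : -1 < p) (hq : -1 < q) (ht : 0 < t)
    (hε : 0 ≤ ε) (hS : S ⊆ Ioc 0 t) (hSm : MeasurableSet S)
    (hρ : ∀ s ∈ S, |ρ s| ≤ ε * s ^ q) :
    ‖∫ s in S, (t - s) ^ p * ρ s‖ ≤ ε * ∫ s in Ioc 0 t, (t - s) ^ p * s ^ q := by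
  have hint : IntegrableOn (fun s => ε * ((t - s) ^ p * s ^ q)) (Ioc 0 t) :=
    (integrableOn_sub_rpow_mul_rpow hp hq ht).const_mul ε
  rw [← integral_const_mul]
  calc ‖∫ s in S, (t - s) ^ p * ρ s‖ ≤ ∫ s in S, ε * ((t - s) ^ p * s ^ q) :=
        norm_integral_le_of_norm_le (hint.mono_set hS) (ae_restrict_of_forall_mem hSm
          fun s hs => norm_sub_rpow_mul_le_of_abs_le (hS hs) (hρ s hs))
    _ ≤ ∫ s in Ioc 0 t, ε * ((t - s) ^ p * s ^ q) :=
        setIntegral_mono_set hint (ae_restrict_of_forall_mem measurableSet_Ioc fun s hs =>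
          mul_nonneg hε (mul_nonneg (Real.rpow_nonneg (sub_nonneg.2 hs.2) _)
            (Real.rpow_nonneg hs.1.le _))) hS.eventuallyLE

end Tail

lemma eventually_abs_le_mul_rpow_neg {β ε : ℝ} {f : ℝ → ℝ}
    (hf : Tendsto (fun s => s ^ β * f s) atTop (𝓝 0)) (hε : 0 < ε) :
    ∀ᶠ s in atTop, |f s| ≤ ε * s ^ (-β) := by
  filter_upwards [NormedAddGroup.tendsto_nhds_zero.1 hf ε hε, eventually_gt_atTop 0]
    with s hs hs0
  have hpow : 0 < s ^ β := Real.rpow_pos_of_pos hs0 β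
  rw [Real.norm_eq_abs, abs_mul, abs_of_pos hpow] at hs
  rw [Real.rpow_neg hs0.le, ← div_eq_mul_inv, le_div_iff₀ hpow, mul_comm]
  exact hs.le

lemma setIntegral_Ioo_eq_add_Ico {f : ℝ → ℝ} {a M t : ℝ} (haM : a < M) (hMt : M ≤ t)
    (hf₁ : IntegrableOn f (Ioo a M)) (hf₂ : IntegrableOn f (Ico M t)) :
    ∫ s in Ioo a t, f s = (∫ s in Ioo a M, f s) + ∫ s in Ico M t, f s := by
  rw [← Ioo_union_Ico_eq_Ioo haM hMt, setIntegral_union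
    ((Iio_disjoint_Ici le_rfl).mono Ioo_subset_Iio_self Ico_subset_Ici_self) measurableSet_Ico
    hf₁ hf₂]

theorem stmt_4_general (β : ℝ) (hβ0 : 0 < β) (hβ1 : β < 1)
    (ρ : ℝ → ℝ)
    (hρint : ∀ T > 0, IntegrableOn ρ (Ioc (0:ℝ) T))
    (hlim : Tendsto (fun t => t ^ β * ρ t) atTop (nhds 0)) :
    Tendsto (fun t => ∫ s in Ioo (0:ℝ) t, (t - s) ^ (β - 1) * ρ s) atTop (nhds 0) := by
  have hp : -1 < β - 1 := by linarith
  have hq : -1 < -β := by linarith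
  refine NormedAddGroup.tendsto_nhds_zero.2 fun ε hε => ?_
  obtain ⟨δ, hδ, hδC⟩ := exists_pos_mul_lt (half_pos hε)
    (∫ u in Ioc (0:ℝ) 1, (1 - u) ^ (β - 1) * u ^ (-β))
  obtain ⟨M, hM⟩ := eventually_atTop.1
    ((eventually_abs_le_mul_rpow_neg hlim hδ).and (eventually_gt_atTop 0))
  have hM0 : 0 < M := (hM M le_rfl).2
  have hρhead : IntegrableOn ρ (Ioo 0 M) := (hρint M hM0).mono_set Ioo_subset_Ioc_self
  have hhead := tendsto_setIntegral_sub_rpow_mul_atTop (sub_neg.2 hβ1) (fun s hs => hs.2.le)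
    measurableSet_Ioo hρhead
  filter_upwards [NormedAddGroup.tendsto_nhds_zero.1 hhead (ε / 2) (half_pos hε),
    eventually_gt_atTop M] with t hsmall htM
  have ht0 : 0 < t := hM0.trans htM
  have hS : Ico M t ⊆ Ioc 0 t := fun s hs => ⟨hM0.trans_le hs.1, hs.2.le⟩
  have hbound : ∀ s ∈ Ico M t, |ρ s| ≤ δ * s ^ (-β) := fun s hs => (hM s hs.1).1
  have htail := norm_setIntegral_sub_rpow_mul_le hp hq ht0 hδ.le hS measurableSet_Ico hbound
  rw [integral_Ioc_sub_rpow_mul_rpow _ _ ht0, show β - 1 + -β + 1 = 0 by ring,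
    Real.rpow_zero, one_mul, mul_comm] at htail
  rw [setIntegral_Ioo_eq_add_Ico hM0 htM.le
    (integrableOn_sub_rpow_mul (sub_neg.2 hβ1).le htM (fun s hs => hs.2.le) measurableSet_Ioo
      hρhead)
    (integrableOn_sub_rpow_mul_of_abs_le hp hq ht0 hS measurableSet_Ico
      ((hρint t ht0).mono_set hS).aestronglyMeasurable hbound)]
  calc _ ≤ _ := norm_add_le _ _
    _ < ε / 2 + ε / 2 := add_lt_add hsmall (htail.trans_lt hδC)
    _ = ε := add_halves ε

/-- Lemma 2.7: if `t^β ρ(t) → 0` as `t → ∞`, then `∫₀ᵗ (t-s)^(β-1) ρ(s) ds → 0`. -/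
theorem stmt_4 (β : ℝ) (hβ0 : 0 < β) (hβ1 : β < 1)
    (ρ : ℝ → ℝ) (hρc : ContinuousOn ρ (Ioi 0))
    (hρint : ∀ T > 0, IntegrableOn ρ (Ioc (0:ℝ) T))
    (hlim : Tendsto (fun t => t ^ β * ρ t) atTop (nhds 0)) :
    Tendsto (fun t => ∫ s in Ioo (0:ℝ) t, (t - s) ^ (β - 1) * ρ s) atTop (nhds 0) :=
  stmt_4_general β hβ0 hβ1 ρ hρint hlim
end

section
/- Let 0<β<1, let a∈ℝ, and suppose ρ is continuous on (0,+∞) and Lebesgue integrable on every bounded subinterval of [0,+∞). If lim_{t→+∞} t^β ρ(t) = a, then lim_{t→+∞} ∫₀ᵗ (t-s)^{β-1} ρ(s) ds = aπ/sin(βπ). -/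
/-! Substituting `s = t v` shows that `∫₀ᵗ (t-s)^(β-1) s^(-β) ds` is the beta integral
`B(1-β, β) = Γ(β) Γ(1-β) = π / sin(βπ)` for every `t > 0`. Hence, writing
`ρ(s) = a s^(-β) + h(s)`, it suffices to show that the integral of `(t-s)^(β-1) h(s)` tends
to `0` when `s^β h(s) → 0`. Split at a large `T` with `|s^β h(s)| ≤ ε` for `s ≥ T`: the part
over `(0, T]` is at most `(t-T)^(β-1) ∫₀ᵀ |h| → 0`, and the part over `(T, t)` is at most `ε`
times the kernel integral, i.e. `ε π / sin(βπ)`. -/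

open MeasureTheory Set Filter Topology

theorem tendsto_sub_rpow_atTop_nhds_zero {r : ℝ} (hr : r < 0) (T : ℝ) :
    Tendsto (fun t => (t - T) ^ r) atTop (𝓝 0) := by
  have h := (tendsto_rpow_neg_atTop (neg_pos.2 hr)).comp
    (tendsto_atTop_add_const_right atTop (-T) tendsto_id)
  simpa [Function.comp_def, ← sub_eq_add_neg] using h

section

variable {β : ℝ}

theorem integral_one_sub_rpow_mul_rpow_neg (hβ0 : 0 < β) (hβ1 : β < 1) :
    ∫ v in (0:ℝ)..1, (1 - v) ^ (β - 1) * v ^ (-β) = Real.pi / Real.sin (β * Real.pi) := by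
  have hGamma := Complex.Gamma_mul_Gamma_eq_betaIntegral (s := ((1 - β : ℝ) : ℂ)) (t := (β : ℂ))
    (by simpa using hβ1) (by simpa using hβ0)
  have hbeta : Complex.betaIntegral ((1 - β : ℝ) : ℂ) β
      = ((∫ v in (0:ℝ)..1, (1 - v) ^ (β - 1) * v ^ (-β) : ℝ) : ℂ) := by
    rw [Complex.betaIntegral, ← intervalIntegral.integral_ofReal]
    refine intervalIntegral.integral_congr fun v hv => ?_
    rw [uIcc_of_le zero_le_one] at hv
    have h1v : 0 ≤ 1 - v := by linarith [hv.2]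
    simp only [Complex.ofReal_mul, Complex.ofReal_cpow hv.1, Complex.ofReal_cpow h1v]
    push_cast
    ring_nf
  rw [hbeta, ← Complex.ofReal_add, sub_add_cancel, Complex.ofReal_one, Complex.Gamma_one,
    one_mul, Complex.Gamma_ofReal, Complex.Gamma_ofReal, ← Complex.ofReal_mul] at hGamma
  rw [← Complex.ofReal_injective hGamma, mul_comm, Real.Gamma_mul_Gamma_one_sub, mul_comm]

theorem integral_sub_rpow_mul_rpow_neg {t : ℝ} (ht : 0 < t) :
    ∫ s in (0:ℝ)..t, (t - s) ^ (β - 1) * s ^ (-β)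
      = ∫ v in (0:ℝ)..1, (1 - v) ^ (β - 1) * v ^ (-β) := by
  have hscale : ∀ v ∈ uIcc (0:ℝ) 1,
      (t - t * v) ^ (β - 1) * (t * v) ^ (-β) = t⁻¹ * ((1 - v) ^ (β - 1) * v ^ (-β)) := by
    intro v hv
    rw [uIcc_of_le zero_le_one] at hv
    have htt : t ^ (β - 1) * t ^ (-β) = t⁻¹ := by
      rw [← Real.rpow_add ht, ← Real.rpow_neg_one]; ring_nf
    rw [← mul_one_sub, Real.mul_rpow ht.le (by linarith [hv.2]), Real.mul_rpow ht.le hv.1,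
      ← htt]
    ring
  have h := intervalIntegral.integral_comp_mul_left
    (fun s => (t - s) ^ (β - 1) * s ^ (-β)) ht.ne' (a := 0) (b := 1)
  rw [intervalIntegral.integral_congr hscale, intervalIntegral.integral_const_mul, mul_zero,
    mul_one, smul_eq_mul] at h
  exact (mul_left_cancel₀ (inv_ne_zero ht.ne') h).symm

theorem pi_div_sin_mul_pi_pos (hβ0 : 0 < β) (hβ1 : β < 1) :
    0 < Real.pi / Real.sin (β * Real.pi) :=
  div_pos Real.pi_pos <| Real.sin_pos_of_pos_of_lt_pi (by positivity)
    (by nlinarith [Real.pi_pos])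

theorem setIntegral_Ioo_sub_rpow_mul_rpow_neg (hβ0 : 0 < β) (hβ1 : β < 1) {t : ℝ}
    (ht : 0 < t) :
    ∫ s in Ioo 0 t, (t - s) ^ (β - 1) * s ^ (-β) = Real.pi / Real.sin (β * Real.pi) := by
  rw [← integral_Ioc_eq_integral_Ioo, ← intervalIntegral.integral_of_le ht.le,
    integral_sub_rpow_mul_rpow_neg ht, integral_one_sub_rpow_mul_rpow_neg hβ0 hβ1]

theorem integrableOn_sub_rpow_mul_rpow_neg (hβ0 : 0 < β) (hβ1 : β < 1) {t : ℝ} (ht : 0 < t) :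
    IntegrableOn (fun s => (t - s) ^ (β - 1) * s ^ (-β)) (Ioo 0 t) := by
  -- otherwise the integral would be the junk value `0`
  by_contra hK
  have hB := setIntegral_Ioo_sub_rpow_mul_rpow_neg hβ0 hβ1 ht
  rw [integral_undef hK] at hB
  exact (pi_div_sin_mul_pi_pos hβ0 hβ1).ne hB

variable {h : ℝ → ℝ} {T t C : ℝ}

theorem norm_sub_rpow_mul_le_of_le (hβ1 : β ≤ 1) (hTt : T < t) {s : ℝ} (hs : s ≤ T) :
    ‖(t - s) ^ (β - 1) * h s‖ ≤ (t - T) ^ (β - 1) * ‖h s‖ := by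
  rw [norm_mul, Real.norm_of_nonneg (Real.rpow_nonneg (by linarith) _)]
  exact mul_le_mul_of_nonneg_right
    (Real.rpow_le_rpow_of_nonpos (sub_pos.2 hTt) (by linarith) (by linarith)) (norm_nonneg _)

theorem norm_sub_rpow_mul_le_of_abs_rpow_mul_le {s : ℝ} (hs : 0 < s) (hst : s < t)
    (hC : |s ^ β * h s| ≤ C) :
    ‖(t - s) ^ (β - 1) * h s‖ ≤ C * ((t - s) ^ (β - 1) * s ^ (-β)) := by
  have hfactor : (t - s) ^ (β - 1) * h s = (t - s) ^ (β - 1) * s ^ (-β) * (s ^ β * h s) := by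
    rw [mul_assoc, ← mul_assoc (s ^ (-β)), ← Real.rpow_add hs, neg_add_cancel, Real.rpow_zero,
      one_mul]
  rw [hfactor, norm_mul, Real.norm_of_nonneg (by have := hst.le; positivity), mul_comm C]
  gcongr
  exact hC

theorem integrableOn_sub_rpow_mul_s5 (hβ0 : 0 < β) (hβ1 : β < 1) (hT : 0 < T) (hTt : T < t)
    (hint : IntegrableOn h (Ioc 0 t)) (hC : ∀ s ≥ T, |s ^ β * h s| ≤ C) :
    IntegrableOn (fun s => (t - s) ^ (β - 1) * h s) (Ioo 0 t) := by
  have hmeas : AEStronglyMeasurable (fun s => (t - s) ^ (β - 1) * h s)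
      (volume.restrict (Ioc 0 t)) :=
    (by fun_prop : Measurable fun s : ℝ => (t - s) ^ (β - 1)).aestronglyMeasurable.mul
      hint.aestronglyMeasurable
  rw [← Ioc_union_Ioo_eq_Ioo hT.le hTt]
  refine IntegrableOn.union ?_ ?_
  · refine ((hint.mono_set (Ioc_subset_Ioc_right hTt.le)).norm.const_mul
      ((t - T) ^ (β - 1))).mono'
      (hmeas.mono_set (Ioc_subset_Ioc_right hTt.le)) ?_
    exact ae_restrict_of_forall_mem measurableSet_Ioc fun s hs =>
      norm_sub_rpow_mul_le_of_le hβ1.le hTt hs.2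
  · refine (((integrableOn_sub_rpow_mul_rpow_neg hβ0 hβ1 (hT.trans hTt)).mono_set
      (Ioo_subset_Ioo_left hT.le)).const_mul C).mono'
      (hmeas.mono_set (Ioo_subset_Ioc_self.trans (Ioc_subset_Ioc_left hT.le))) ?_
    exact ae_restrict_of_forall_mem measurableSet_Ioo fun s hs =>
      norm_sub_rpow_mul_le_of_abs_rpow_mul_le (hT.trans hs.1) hs.2 (hC s hs.1.le)

theorem abs_setIntegral_sub_rpow_mul_le (hβ0 : 0 < β) (hβ1 : β < 1) (hT : 0 < T) (hTt : T < t)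
    (hint : IntegrableOn h (Ioc 0 t)) (hC : ∀ s ≥ T, |s ^ β * h s| ≤ C) :
    |∫ s in Ioo 0 t, (t - s) ^ (β - 1) * h s|
      ≤ (t - T) ^ (β - 1) * (∫ s in Ioc 0 T, |h s|)
        + C * (Real.pi / Real.sin (β * Real.pi)) := by
  have hK := integrableOn_sub_rpow_mul_s5 hβ0 hβ1 hT hTt hint hC
  have hP := integrableOn_sub_rpow_mul_rpow_neg hβ0 hβ1 (hT.trans hTt)
  have hC0 : 0 ≤ C := (abs_nonneg _).trans (hC T le_rfl)
  have hdisj : Disjoint (Ioc 0 T) (Ioo T t) := disjoint_left.2 fun _ hs hs' => hs'.1.not_ge hs.2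
  rw [← Ioc_union_Ioo_eq_Ioo hT.le hTt] at hK ⊢
  rw [setIntegral_union hdisj measurableSet_Ioo hK.left_of_union hK.right_of_union]
  have hhead : |∫ s in Ioc 0 T, (t - s) ^ (β - 1) * h s|
      ≤ (t - T) ^ (β - 1) * ∫ s in Ioc 0 T, |h s| := by
    rw [← integral_const_mul, ← Real.norm_eq_abs]
    refine norm_integral_le_of_norm_le
      ((hint.mono_set (Ioc_subset_Ioc_right hTt.le)).norm.const_mul ((t - T) ^ (β - 1))) ?_
    exact ae_restrict_of_forall_mem measurableSet_Ioc fun s hs =>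
      norm_sub_rpow_mul_le_of_le hβ1.le hTt hs.2
  have htail : |∫ s in Ioo T t, (t - s) ^ (β - 1) * h s|
      ≤ C * (Real.pi / Real.sin (β * Real.pi)) := by
    rw [← setIntegral_Ioo_sub_rpow_mul_rpow_neg hβ0 hβ1 (hT.trans hTt), ← integral_const_mul,
      ← Real.norm_eq_abs]
    refine (norm_integral_le_of_norm_le ((hP.mono_set (Ioo_subset_Ioo_left hT.le)).const_mul C)
      (ae_restrict_of_forall_mem measurableSet_Ioo fun s hs =>
        norm_sub_rpow_mul_le_of_abs_rpow_mul_le (hT.trans hs.1) hs.2 (hC s hs.1.le))).trans ?_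
    refine setIntegral_mono_set (hP.const_mul C) ?_ (Ioo_subset_Ioo_left hT.le).eventuallyLE
    exact ae_restrict_of_forall_mem measurableSet_Ioo fun s hs =>
      mul_nonneg hC0 (mul_nonneg (Real.rpow_nonneg (by linarith [hs.2]) _)
        (Real.rpow_nonneg hs.1.le _))
  exact (abs_add_le _ _).trans (add_le_add hhead htail)

theorem eventually_integrableOn_sub_rpow_mul (hβ0 : 0 < β) (hβ1 : β < 1)
    (hint : ∀ T > 0, IntegrableOn h (Ioc 0 T)) {a : ℝ}
    (hlim : Tendsto (fun t => t ^ β * h t) atTop (𝓝 a)) :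
    ∀ᶠ t in atTop, IntegrableOn (fun s => (t - s) ^ (β - 1) * h s) (Ioo 0 t) := by
  obtain ⟨T, hT⟩ := eventually_atTop.1 (hlim.abs.eventually (gt_mem_nhds (lt_add_one |a|)))
  filter_upwards [eventually_gt_atTop (max T 1)] with t ht
  exact integrableOn_sub_rpow_mul_s5 hβ0 hβ1 (lt_max_of_lt_right one_pos) ht
    (hint t (by linarith [le_max_right T 1])) fun s hs => (hT s (le_of_max_le_left hs)).le

theorem tendsto_setIntegral_sub_rpow_mul_zero (hβ0 : 0 < β) (hβ1 : β < 1)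
    (hint : ∀ T > 0, IntegrableOn h (Ioc 0 T))
    (hlim : Tendsto (fun t => t ^ β * h t) atTop (𝓝 0)) :
    Tendsto (fun t => ∫ s in Ioo 0 t, (t - s) ^ (β - 1) * h s) atTop (𝓝 0) := by
  set B := Real.pi / Real.sin (β * Real.pi)
  have hB : 0 < B := pi_div_sin_mul_pi_pos hβ0 hβ1
  refine Metric.tendsto_nhds.2 fun ε hε => ?_
  obtain ⟨T₀, hT₀⟩ := Metric.tendsto_atTop.1 hlim (ε / (2 * B)) (by positivity)
  set T := max T₀ 1
  have hC : ∀ s ≥ T, |s ^ β * h s| ≤ ε / (2 * B) := fun s hs => by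
    simpa [Real.dist_0_eq_abs] using (hT₀ s (le_of_max_le_left hs)).le
  have hhead := (tendsto_sub_rpow_atTop_nhds_zero (by linarith : β - 1 < 0) T).mul_const
    (∫ s in Ioc 0 T, |h s|)
  rw [zero_mul] at hhead
  filter_upwards [hhead.eventually (gt_mem_nhds (half_pos hε)), eventually_gt_atTop T]
    with t hsmall hTt
  rw [Real.dist_0_eq_abs]
  calc |∫ s in Ioo 0 t, (t - s) ^ (β - 1) * h s|
      ≤ (t - T) ^ (β - 1) * (∫ s in Ioc 0 T, |h s|) + ε / (2 * B) * B :=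
        abs_setIntegral_sub_rpow_mul_le hβ0 hβ1 (lt_max_of_lt_right one_pos) hTt
          (hint t (by linarith [le_max_right T₀ 1])) hC
    _ < ε / 2 + ε / 2 := by
        rw [div_mul_eq_mul_div, mul_div_mul_right _ _ hB.ne']
        linarith
    _ = ε := add_halves ε

end

theorem stmt_5_general (β a : ℝ) (hβ0 : 0 < β) (hβ1 : β < 1)
    (ρ : ℝ → ℝ)
    (hρint : ∀ T > 0, IntegrableOn ρ (Ioc (0:ℝ) T))
    (hlim : Tendsto (fun t => t ^ β * ρ t) atTop (nhds a)) :
    Tendsto (fun t => ∫ s in Ioo (0:ℝ) t, (t - s) ^ (β - 1) * ρ s) atTop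
      (nhds (a * Real.pi / Real.sin (β * Real.pi))) := by
  have hhint : ∀ T > 0, IntegrableOn (fun s => ρ s - a * s ^ (-β)) (Ioc 0 T) := fun T hT =>
    (hρint T hT).sub (((intervalIntegrable_iff_integrableOn_Ioc_of_le hT.le).1
      (intervalIntegral.intervalIntegrable_rpow' (by linarith))).const_mul a)
  have hhlim : Tendsto (fun t => t ^ β * (ρ t - a * t ^ (-β))) atTop (𝓝 0) := by
    refine (sub_self a ▸ hlim.sub_const a).congr' ?_
    filter_upwards [eventually_gt_atTop 0] with t ht
    rw [mul_sub, mul_left_comm, ← Real.rpow_add ht, add_neg_cancel, Real.rpow_zero, mul_one]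
  have hsplit : ∀ᶠ t in atTop,
      (∫ s in Ioo 0 t, (t - s) ^ (β - 1) * (ρ s - a * s ^ (-β)))
        + a * (Real.pi / Real.sin (β * Real.pi))
        = ∫ s in Ioo 0 t, (t - s) ^ (β - 1) * ρ s := by
    filter_upwards [eventually_integrableOn_sub_rpow_mul hβ0 hβ1 hρint hlim,
      eventually_gt_atTop 0] with t hρt ht
    simp_rw [mul_sub, mul_left_comm _ a]
    rw [integral_sub hρt ((integrableOn_sub_rpow_mul_rpow_neg hβ0 hβ1 ht).const_mul a),
      integral_const_mul, setIntegral_Ioo_sub_rpow_mul_rpow_neg hβ0 hβ1 ht, sub_add_cancel]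
  rw [mul_div_assoc]
  simpa using ((tendsto_setIntegral_sub_rpow_mul_zero hβ0 hβ1 hhint hhlim).add_const
    (a * (Real.pi / Real.sin (β * Real.pi)))).congr' hsplit

/-- Lemma 2.8: if `t^β ρ(t) → a` as `t → ∞`, then
`∫₀ᵗ (t-s)^(β-1) ρ(s) ds → aπ / sin(βπ)`. -/
theorem stmt_5 (β a : ℝ) (hβ0 : 0 < β) (hβ1 : β < 1)
    (ρ : ℝ → ℝ) (hρc : ContinuousOn ρ (Ioi 0))
    (hρint : ∀ T > 0, IntegrableOn ρ (Ioc (0:ℝ) T))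
    (hlim : Tendsto (fun t => t ^ β * ρ t) atTop (nhds a)) :
    Tendsto (fun t => ∫ s in Ioo (0:ℝ) t, (t - s) ^ (β - 1) * ρ s) atTop
      (nhds (a * Real.pi / Real.sin (β * Real.pi))) :=
  stmt_5_general β a hβ0 hβ1 ρ hρint hlim
end

section
/- For the function y(t) = ∫₀ᵗ (t-s)^{-1/2} (1+√s)^{-1} ds one has, for all t>0, π − (Γ(1/2)Γ(1/3)/Γ(5/6)) t^{-1/6} ≤ y(t) ≤ π, and consequently lim_{t→+∞} y(t) = π. -/
/-!
Comparing `(1 + √s)⁻¹` with `s^(-1/2)` from above and with `s^(-1/2) - s^(-2/3)` from below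
reduces both bounds to the Beta integrals
`∫₀ᵗ s^(u-1) (t-s)^(-1/2) ds = Γ(u)Γ(1/2)/Γ(u+1/2) t^(u-1/2)`: for `u = 1/2` this is
`Γ(1/2)² = π`, and for `u = 1/3` it is the error term, which is `O(t^(-1/6))`; the limit
follows by squeezing.
-/

open MeasureTheory Set Filter

lemma intervalIntegrable_rpow_mul_sub_rpow_left {p : ℝ} (q : ℝ) (hp : -1 < p) {t : ℝ}
    (ht : 0 < t) : IntervalIntegrable (fun s => s ^ p * (t - s) ^ q) volume 0 (t / 2) := by
  refine (intervalIntegral.intervalIntegrable_rpow' hp).mul_continuousOn ?_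
  refine ContinuousOn.rpow_const (by fun_prop) fun s hs => Or.inl ?_
  rw [uIcc_of_le (by positivity)] at hs
  linarith [hs.2]

theorem integrableOn_rpow_mul_sub_rpow {p q t : ℝ} (hp : -1 < p) (hq : -1 < q) (ht : 0 < t) :
    IntegrableOn (fun s => s ^ p * (t - s) ^ q) (Ioo 0 t) := by
  have hleft := intervalIntegrable_rpow_mul_sub_rpow_left q hp ht
  have hright : IntervalIntegrable (fun s => s ^ p * (t - s) ^ q) volume (t / 2) t := by
    have := (intervalIntegrable_rpow_mul_sub_rpow_left p hq ht).comp_sub_left t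
    simpa [mul_comm, show t - t / 2 = t / 2 by ring] using this.symm
  exact ((intervalIntegrable_iff_integrableOn_Ioc_of_le ht.le).1 (hleft.trans hright)).mono_set
    Ioo_subset_Ioc_self

theorem integral_rpow_mul_sub_rpow {u v t : ℝ} (hu : 0 < u) (hv : 0 < v) (ht : 0 < t) :
    ∫ s in Ioo 0 t, s ^ (u - 1) * (t - s) ^ (v - 1) =
      t ^ (u + v - 1) * (Real.Gamma u * Real.Gamma v / Real.Gamma (u + v)) := by
  have hΓ :
      Complex.Gamma u * Complex.Gamma v = Complex.Gamma (u + v) * Complex.betaIntegral u v :=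
    Complex.Gamma_mul_Gamma_eq_betaIntegral (by simpa using hu) (by simpa using hv)
  have hΓ_ne : Complex.Gamma (u + v) ≠ 0 := by
    rw [← Complex.ofReal_add, Complex.Gamma_ofReal]
    exact_mod_cast (Real.Gamma_pos_of_pos (add_pos hu hv)).ne'
  have hcast : ((∫ s in Ioo 0 t, s ^ (u - 1) * (t - s) ^ (v - 1) : ℝ) : ℂ) =
      ∫ s in (0 : ℝ)..t, (s : ℂ) ^ ((u : ℂ) - 1) * ((t : ℂ) - s) ^ ((v : ℂ) - 1) := by
    rw [intervalIntegral.integral_of_le ht.le, integral_Ioc_eq_integral_Ioo,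
      ← integral_complex_ofReal]
    refine setIntegral_congr_fun measurableSet_Ioo fun s hs => ?_
    simp only [Complex.ofReal_mul, Complex.ofReal_cpow hs.1.le,
      Complex.ofReal_cpow (sub_nonneg.2 hs.2.le), Complex.ofReal_sub, Complex.ofReal_one]
  have hβ :
      Complex.betaIntegral u v = Complex.Gamma u * Complex.Gamma v / Complex.Gamma (u + v) := by
    rw [eq_div_iff hΓ_ne, hΓ, mul_comm]
  apply Complex.ofReal_injective
  rw [hcast, Complex.betaIntegral_scaled _ _ ht, hβ]
  simp only [← Complex.ofReal_add, Complex.Gamma_ofReal, ← Complex.ofReal_one,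
    ← Complex.ofReal_sub, ← Complex.ofReal_cpow ht.le]
  push_cast
  ring

lemma rpow_neg_half_sub_inv_one_add_sqrt_le {s : ℝ} (hs : 0 < s) :
    s ^ (-(1/2) : ℝ) - (1 + Real.sqrt s)⁻¹ ≤ s ^ (-(2/3) : ℝ) := by
  have hsqrt : 0 < Real.sqrt s := Real.sqrt_pos.2 hs
  have hsqrt_eq : s ^ (1/2 : ℝ) = Real.sqrt s := (Real.sqrt_eq_rpow s).symm
  -- `s ^ (2/3) ≤ max (√s) s`, according as `s ≤ 1` or `1 ≤ s`
  have hle : s ^ (2/3 : ℝ) ≤ Real.sqrt s * (1 + Real.sqrt s) := by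
    rw [mul_one_add, Real.mul_self_sqrt hs.le]
    rcases le_total s 1 with h | h
    · have := Real.rpow_le_rpow_of_exponent_ge hs h (by norm_num : (1/2 : ℝ) ≤ 2/3)
      rw [hsqrt_eq] at this
      linarith
    · have := Real.rpow_le_rpow_of_exponent_le h (by norm_num : (2/3 : ℝ) ≤ 1)
      rw [Real.rpow_one] at this
      linarith [hsqrt.le]
  calc s ^ (-(1/2) : ℝ) - (1 + Real.sqrt s)⁻¹ = (Real.sqrt s * (1 + Real.sqrt s))⁻¹ := by
        rw [Real.rpow_neg hs.le, hsqrt_eq]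
        field_simp
        ring
    _ ≤ s ^ (-(2/3) : ℝ) := by
        rw [Real.rpow_neg hs.le]
        exact inv_anti₀ (by positivity) hle

lemma inv_one_add_sqrt_le_rpow_neg_half {s : ℝ} (hs : 0 < s) :
    (1 + Real.sqrt s)⁻¹ ≤ s ^ (-(1/2) : ℝ) := by
  rw [Real.rpow_neg hs.le, ← Real.sqrt_eq_rpow]
  exact inv_anti₀ (Real.sqrt_pos.2 hs) (by linarith)

noncomputable def abelIntegral (f : ℝ → ℝ) (t : ℝ) : ℝ :=
  ∫ s in Ioo 0 t, (t - s) ^ (-(1/2) : ℝ) * f s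

section abelIntegral

variable {t : ℝ}

theorem abelIntegral_mono_on {f g : ℝ → ℝ}
    (hf : IntegrableOn (fun s => (t - s) ^ (-(1/2) : ℝ) * f s) (Ioo 0 t))
    (hg : IntegrableOn (fun s => (t - s) ^ (-(1/2) : ℝ) * g s) (Ioo 0 t))
    (h : ∀ s ∈ Ioo 0 t, f s ≤ g s) : abelIntegral f t ≤ abelIntegral g t :=
  setIntegral_mono_on hf hg measurableSet_Ioo fun s hs =>
    mul_le_mul_of_nonneg_left (h s hs) (Real.rpow_nonneg (sub_nonneg.2 hs.2.le) _)

theorem abelIntegral_sub {f g : ℝ → ℝ}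
    (hf : IntegrableOn (fun s => (t - s) ^ (-(1/2) : ℝ) * f s) (Ioo 0 t))
    (hg : IntegrableOn (fun s => (t - s) ^ (-(1/2) : ℝ) * g s) (Ioo 0 t)) :
    abelIntegral (fun s => f s - g s) t = abelIntegral f t - abelIntegral g t := by
  simp only [abelIntegral, mul_sub]
  exact integral_sub hf hg

theorem integrableOn_abelIntegrand_rpow {p : ℝ} (hp : -1 < p) (ht : 0 < t) :
    IntegrableOn (fun s => (t - s) ^ (-(1/2) : ℝ) * s ^ p) (Ioo 0 t) := by
  simpa only [mul_comm] using integrableOn_rpow_mul_sub_rpow hp (by norm_num) ht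

theorem abelIntegral_rpow {u : ℝ} (hu : 0 < u) (ht : 0 < t) :
    abelIntegral (· ^ (u - 1)) t =
      Real.Gamma (1/2) * Real.Gamma u / Real.Gamma (u + 1/2) * t ^ (u - 1/2) := by
  have h := integral_rpow_mul_sub_rpow hu (by norm_num : (0 : ℝ) < 1/2) ht
  simp only [abelIntegral, fun s : ℝ => mul_comm ((t - s) ^ (-(1/2) : ℝ)) (s ^ (u - 1))]
  rw [show (-(1/2) : ℝ) = 1/2 - 1 by norm_num, h]
  ring_nf

theorem abelIntegral_rpow_neg_half (ht : 0 < t) :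
    abelIntegral (· ^ (-(1/2) : ℝ)) t = Real.pi := by
  have h := abelIntegral_rpow (by norm_num : (0 : ℝ) < 1/2) ht
  norm_num [Real.Gamma_one_half_eq, Real.mul_self_sqrt Real.pi_pos.le] at h
  exact h

theorem abelIntegral_rpow_neg_two_thirds (ht : 0 < t) :
    abelIntegral (· ^ (-(2/3) : ℝ)) t =
      Real.Gamma (1/2) * Real.Gamma (1/3) / Real.Gamma (5/6) * t ^ (-(1/6) : ℝ) := by
  have h := abelIntegral_rpow (by norm_num : (0 : ℝ) < 1/3) ht
  norm_num at h
  exact h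

end abelIntegral

section inv_one_add_sqrt

variable {t : ℝ}

theorem integrableOn_abelIntegrand_inv_one_add_sqrt (ht : 0 < t) :
    IntegrableOn (fun s => (t - s) ^ (-(1/2) : ℝ) * (1 + Real.sqrt s)⁻¹) (Ioo 0 t) := by
  refine (integrableOn_abelIntegrand_rpow (by norm_num : (-1 : ℝ) < -(1/2)) ht).mono'
    (by fun_prop) ((ae_restrict_iff' measurableSet_Ioo).2 (.of_forall fun s hs => ?_))
  have hts : 0 ≤ t - s := sub_nonneg.2 hs.2.le
  rw [Real.norm_of_nonneg (by positivity)]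
  exact mul_le_mul_of_nonneg_left (inv_one_add_sqrt_le_rpow_neg_half hs.1) (by positivity)

theorem abelIntegral_inv_one_add_sqrt_le_pi (ht : 0 < t) :
    abelIntegral (fun s => (1 + Real.sqrt s)⁻¹) t ≤ Real.pi := by
  rw [← abelIntegral_rpow_neg_half ht]
  exact abelIntegral_mono_on (integrableOn_abelIntegrand_inv_one_add_sqrt ht)
    (integrableOn_abelIntegrand_rpow (by norm_num) ht)
    fun s hs => inv_one_add_sqrt_le_rpow_neg_half hs.1

theorem pi_sub_le_abelIntegral_inv_one_add_sqrt (ht : 0 < t) :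
    Real.pi - Real.Gamma (1/2) * Real.Gamma (1/3) / Real.Gamma (5/6) * t ^ (-(1/6) : ℝ) ≤
      abelIntegral (fun s => (1 + Real.sqrt s)⁻¹) t := by
  have hhalf := integrableOn_abelIntegrand_rpow (by norm_num : (-1 : ℝ) < -(1/2)) ht
  have htwo_thirds := integrableOn_abelIntegrand_rpow (by norm_num : (-1 : ℝ) < -(2/3)) ht
  rw [← abelIntegral_rpow_neg_half ht, ← abelIntegral_rpow_neg_two_thirds ht,
    ← abelIntegral_sub hhalf htwo_thirds]
  refine abelIntegral_mono_on (by simp_rw [mul_sub]; exact hhalf.sub htwo_thirds)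
    (integrableOn_abelIntegrand_inv_one_add_sqrt ht) fun s hs => ?_
  linarith [rpow_neg_half_sub_inv_one_add_sqrt_le hs.1]

end inv_one_add_sqrt

/-- Remark 2.11 in the paper: for `y(t) = ∫₀ᵗ (t-s)^(-1/2) (1+√s)⁻¹ ds` one has
`π − (Γ(1/2)Γ(1/3)/Γ(5/6)) t^(-1/6) ≤ y(t) ≤ π` for all `t > 0`, and consequently
`y(t) → π` as `t → +∞`. -/
theorem stmt_18 :
    (∀ t : ℝ, 0 < t →
      Real.pi - Real.Gamma (1/2) * Real.Gamma (1/3) / Real.Gamma (5/6) * t ^ (-(1/6) : ℝ) ≤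
        (∫ s in Ioo (0:ℝ) t, (t - s) ^ (-(1/2) : ℝ) * (1 + Real.sqrt s)⁻¹) ∧
      (∫ s in Ioo (0:ℝ) t, (t - s) ^ (-(1/2) : ℝ) * (1 + Real.sqrt s)⁻¹) ≤ Real.pi) ∧
    Tendsto (fun t : ℝ => ∫ s in Ioo (0:ℝ) t, (t - s) ^ (-(1/2) : ℝ) * (1 + Real.sqrt s)⁻¹)
      atTop (nhds Real.pi) := by
  have hbounds (t : ℝ) (ht : 0 < t) :=
    And.intro (pi_sub_le_abelIntegral_inv_one_add_sqrt ht)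
      (abelIntegral_inv_one_add_sqrt_le_pi ht)
  refine ⟨hbounds, ?_⟩
  have hlower : Tendsto (fun t : ℝ =>
      Real.pi - Real.Gamma (1/2) * Real.Gamma (1/3) / Real.Gamma (5/6) * t ^ (-(1/6) : ℝ))
      atTop (nhds Real.pi) := by
    simpa using tendsto_const_nhds.sub
      ((tendsto_rpow_neg_atTop (by norm_num : (0 : ℝ) < 1/6)).const_mul
        (Real.Gamma (1/2) * Real.Gamma (1/3) / Real.Gamma (5/6)))
  refine tendsto_of_tendsto_of_tendsto_of_le_of_le' hlower tendsto_const_nhds ?_ ?_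
  · filter_upwards [eventually_gt_atTop 0] with t ht using (hbounds t ht).1
  · filter_upwards [eventually_gt_atTop 0] with t ht using (hbounds t ht).2
end
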